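/- There exists an instance of the swap Schelling game (a finite connected graph G, window size w ≥ 1, tolerance parameter τ, agent sets A and B, and favorite-node assignments) together with a stable bijective placement p and a socially optimal placement p_opt (a placement minimizing the social cost vector lexicographically) such that the total distance cost of p is strictly smaller than the total distance cost of p_opt: Σ_x (d_G(fav_x, p(x)) + 1) < Σ_x (d_G(fav_x, p_opt(x)) + 1). -/

import Mathlib

/-!
Take the triangle `0 1 2` with a pendant node `3` at `0`, window `w = 1` and `τ = 1/3`. Agents
`0, 1` are of type `B`, agents `2, 3` of type `A`, and agent `i` sits on her favorite node `i`.
This placement is stable: nobody can improve her distance cost, the two `B` agents are happy and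
pay nothing, and a swap within one type merely exchanges the two costs. Agent `2` is unhappy,
however, while swapping agents `0` and `2` makes everybody happy at total distance cost `6`.
A placement making everybody happy differs from the favorite one, so it moves at least two agents
and costs at least `4 + 2`; hence that swap is socially optimal, yet it is more expensive than the
stable placement, whose cost is `4`.
-/

open SimpleGraph Finset

namespace Schelling

variable {V I : Type*}

/-- The `w`-neighborhood of a node `u`: all nodes `v ≠ u` with `d_G(u,v) ≤ w`. -/
def nbhd (G : SimpleGraph V) (w : ℕ) (u : V) : Set V :=
  {v | v ≠ u ∧ G.dist u v ≤ w}

/-- `|N⁺(p(x))|`: number of nodes in the `w`-neighborhood of `p x` occupied by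
agents of the same type as `x`. -/
noncomputable def sCount (G : SimpleGraph V) (w : ℕ) (tp : I → Bool) (p : I → V) (x : I) : ℕ :=
  {v | v ∈ nbhd G w (p x) ∧ ∃ y, p y = v ∧ tp y = tp x}.ncard

/-- `|N⁻(p(x))|`: number of nodes in the `w`-neighborhood of `p x` occupied by
agents of the other type. -/
noncomputable def dCount (G : SimpleGraph V) (w : ℕ) (tp : I → Bool) (p : I → V) (x : I) : ℕ :=
  {v | v ∈ nbhd G w (p x) ∧ ∃ y, p y = v ∧ tp y ≠ tp x}.ncard

/-- An agent is isolated if no node of its neighborhood is occupied. -/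
def isolated (G : SimpleGraph V) (w : ℕ) (tp : I → Bool) (p : I → V) (x : I) : Prop :=
  sCount G w tp p x + dCount G w tp p x = 0

/-- The (scalar) cost of agent `x`: `τ` if isolated, otherwise
`max 0 (τ - |N⁺|/(|N⁺| + |N⁻|))`. -/
noncomputable def ucost (G : SimpleGraph V) (w : ℕ) (τ : ℝ) (tp : I → Bool) (p : I → V)
    (x : I) : ℝ :=
  if sCount G w tp p x + dCount G w tp p x = 0 then τ
  else max 0 (τ - (sCount G w tp p x : ℝ) / ((sCount G w tp p x : ℝ) + (dCount G w tp p x : ℝ)))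

/-- An agent is happy if it is not isolated and its local happiness ratio is at least `τ`. -/
def happy (G : SimpleGraph V) (w : ℕ) (τ : ℝ) (tp : I → Bool) (p : I → V) (x : I) : Prop :=
  sCount G w tp p x + dCount G w tp p x ≠ 0 ∧
    τ ≤ (sCount G w tp p x : ℝ) / ((sCount G w tp p x : ℝ) + (dCount G w tp p x : ℝ))

/-- The vector cost of agent `x`: scalar cost together with `d_G(fav_x, p x) + 1`,
to be compared lexicographically. -/
noncomputable def vcost (G : SimpleGraph V) (w : ℕ) (τ : ℝ) (tp : I → Bool) (fav : I → V)
    (p : I → V) (x : I) : ℝ × ℕ :=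
  (ucost G w τ tp p x, G.dist (fav x) (p x) + 1)

/-- The number of colored pairs `Φ(p) = (1/2) · Σ_x |N⁻(p(x))|`. -/
noncomputable def Phi [Fintype I] (G : SimpleGraph V) (w : ℕ) (tp : I → Bool) (p : I → V) : ℝ :=
  (1 / 2) * ∑ x : I, (dCount G w tp p x : ℝ)

/-- The pair potential `(Φ(p), Σ_x d_G(fav_x, p x))`, compared lexicographically. -/
noncomputable def PhiPair [Fintype I] (G : SimpleGraph V) (w : ℕ) (tp : I → Bool) (fav : I → V)
    (p : I → V) : ℝ × ℕ :=
  (Phi G w tp p, ∑ x : I, G.dist (fav x) (p x))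

/-- The placement obtained from `p` by swapping the locations of agents `x` and `y`. -/
def swapP [DecidableEq I] (p : I → V) (x y : I) : I → V := p ∘ Equiv.swap x y

/-- The agents of type `A`. -/
def typeA [Fintype I] (tp : I → Bool) : Finset I := Finset.univ.filter (fun i => tp i = true)

/-- The agents of type `B`. -/
def typeB [Fintype I] (tp : I → Bool) : Finset I := Finset.univ.filter (fun i => tp i = false)

/-- A placement is stable for the uniform SSG if no pair of agents can both strictly
decrease their cost by swapping. -/
def uStable (G : SimpleGraph V) (w : ℕ) (τ : ℝ) (tp : I → Bool) (p : I → V)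
    [DecidableEq I] : Prop :=
  ∀ x y : I, ¬ (ucost G w τ tp (swapP p x y) x < ucost G w τ tp p x ∧
                ucost G w τ tp (swapP p x y) y < ucost G w τ tp p y)

/-- A placement is stable for the SSG with favorite nodes if no pair of agents can both
strictly lexicographically decrease their cost vector by swapping. -/
def vStable (G : SimpleGraph V) (w : ℕ) (τ : ℝ) (tp : I → Bool) (fav : I → V) (p : I → V)
    [DecidableEq I] : Prop :=
  ∀ x y : I, ¬ (toLex (vcost G w τ tp fav (swapP p x y) x) < toLex (vcost G w τ tp fav p x) ∧
                toLex (vcost G w τ tp fav (swapP p x y) y) < toLex (vcost G w τ tp fav p y))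



open Classical in
/-- The weight of the (ordered) pair of nodes `(u,v)` in the jump-game potential:
`1` if both are occupied by agents of different types, `1/3` if at least one is empty,
and `0` otherwise. -/
noncomputable def edgeW (tp : I → Bool) (p : I → V) (u v : V) : ℝ :=
  if ∃ x y : I, p x = u ∧ p y = v ∧ tp x ≠ tp y then 1
  else if (∀ x : I, p x ≠ u) ∨ (∀ y : I, p y ≠ v) then 1 / 3
  else 0

open Classical in
/-- The edge-weight potential `Φ(p) = Σ_{e ∈ E} w_e(p)`, written as half the sum over
ordered adjacent pairs (each edge is counted twice, and `edgeW` is symmetric). -/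
noncomputable def jumpPhi [Fintype V] (G : SimpleGraph V) (tp : I → Bool) (p : I → V) : ℝ :=
  (1 / 2) * ∑ u : V, ∑ v : V, if G.Adj u v then edgeW tp p u v else 0

/-- A placement is stable for the uniform JSG if no agent can strictly decrease her cost
by jumping to an empty node. -/
def jStable (G : SimpleGraph V) (w : ℕ) (τ : ℝ) (tp : I → Bool) (p : I → V)
    [DecidableEq I] : Prop :=
  ∀ (x : I) (v : V), v ∉ Set.range p →
    ¬ (ucost G w τ tp (Function.update p x v) x < ucost G w τ tp p x)

/-- The social cost of a placement: the number of unhappy agents together with the total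
distance cost, compared lexicographically. -/
noncomputable def socialCost [Fintype I] (G : SimpleGraph V) (w : ℕ) (τ : ℝ) (tp : I → Bool)
    (fav : I → V) (p : I → V) : ℕ × ℕ :=
  ({x : I | ¬ happy G w τ tp p x}.ncard, ∑ x : I, (G.dist (fav x) (p x) + 1))


end Schelling

open Schelling

namespace Schelling

variable {V I : Type*}

lemma mem_nbhd_one_iff {G : SimpleGraph V} (hG : G.Connected) {u v : V} :
    v ∈ nbhd G 1 u ↔ G.Adj u v := by
  refine ⟨fun ⟨hne, hd⟩ => ?_, fun h => ⟨h.ne', (dist_eq_one_iff_adj.mpr h).le⟩⟩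
  exact dist_eq_one_iff_adj.mp (hd.antisymm (hG.pos_dist_of_ne hne.symm))

section Counts

variable [Fintype V] [DecidableEq V] [Fintype I] {G : SimpleGraph V} [DecidableRel G.Adj]

lemma sCount_one_eq_card (hG : G.Connected) (tp : I → Bool) (p : I → V) (x : I) :
    sCount G 1 tp p x = #{v | G.Adj (p x) v ∧ ∃ y, p y = v ∧ tp y = tp x} := by
  rw [sCount, ← Set.ncard_coe_finset]
  congr 1
  ext v
  simp [mem_nbhd_one_iff hG]

lemma dCount_one_eq_card (hG : G.Connected) (tp : I → Bool) (p : I → V) (x : I) :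
    dCount G 1 tp p x = #{v | G.Adj (p x) v ∧ ∃ y, p y = v ∧ tp y ≠ tp x} := by
  rw [dCount, ← Set.ncard_coe_finset]
  congr 1
  ext v
  simp [mem_nbhd_one_iff hG]

end Counts

section Costs

variable {G : SimpleGraph V} {w : ℕ} {τ : ℝ} {tp : I → Bool} {p : I → V} {x : I}

lemma happy_iff : happy G w τ tp p x ↔ sCount G w tp p x + dCount G w tp p x ≠ 0 ∧
    τ * (sCount G w tp p x + dCount G w tp p x) ≤ sCount G w tp p x := by
  refine and_congr_right fun h => ?_
  rw [le_div_iff₀ (by exact_mod_cast Nat.pos_of_ne_zero h)]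

lemma happy_one_third_iff : happy G w (1 / 3) tp p x ↔
    sCount G w tp p x + dCount G w tp p x ≠ 0 ∧ dCount G w tp p x ≤ 2 * sCount G w tp p x := by
  rw [happy_iff, ← Nat.cast_le (α := ℝ)]
  push_cast
  exact and_congr_right fun _ => ⟨fun h => by linarith, fun h => by linarith⟩

lemma ucost_nonneg (hτ : 0 ≤ τ) : 0 ≤ ucost G w τ tp p x := by
  unfold ucost
  split
  · exact hτ
  · exact le_max_left _ _

lemma ucost_eq_zero_of_happy (h : happy G w τ tp p x) : ucost G w τ tp p x = 0 := by
  rw [ucost, if_neg h.1]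
  exact max_eq_left (sub_nonpos.mpr h.2)

lemma ucost_comp_perm (σ : Equiv.Perm I) (hσ : tp ∘ σ = tp) :
    ucost G w τ tp (p ∘ σ) x = ucost G w τ tp p (σ x) := by
  have hexists : ∀ (v : V) (P : Bool → Prop), (∃ y, p (σ y) = v ∧ P (tp y)) ↔ ∃ y, p y = v ∧ P (tp y) :=
    fun v P => σ.exists_congr (fun y => by rw [← congrFun hσ y]; rfl)
  have hs : sCount G w tp (p ∘ σ) x = sCount G w tp p (σ x) := by
    simp only [sCount, Function.comp_apply, ← congrFun hσ x]
    congr 1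
    ext v
    exact and_congr_right fun _ => hexists v (· = tp (σ x))
  have hd : dCount G w tp (p ∘ σ) x = dCount G w tp p (σ x) := by
    simp only [dCount, Function.comp_apply, ← congrFun hσ x]
    congr 1
    ext v
    exact and_congr_right fun _ => hexists v (· ≠ tp (σ x))
  rw [ucost, ucost, hs, hd]

lemma uStable_of_forall_happy_of_type [DecidableEq I] (b : Bool) (hτ : 0 ≤ τ)
    (h : ∀ x, tp x = b → happy G w τ tp p x) : uStable G w τ tp p := by
  rintro x y ⟨hx, hy⟩
  by_cases hxy : tp x = tp y
  · have hσ : tp ∘ Equiv.swap x y = tp := by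
      rw [Equiv.comp_swap_eq_update, hxy, Function.update_eq_self, ← hxy, Function.update_eq_self]
    rw [swapP, ucost_comp_perm _ hσ, Equiv.swap_apply_left] at hx
    rw [swapP, ucost_comp_perm _ hσ, Equiv.swap_apply_right] at hy
    exact lt_asymm hx hy
  · obtain hb | hb : tp x = b ∨ tp y = b := by
      revert hxy; cases tp x <;> cases tp y <;> cases b <;> simp
    · exact (ucost_nonneg hτ).not_gt (ucost_eq_zero_of_happy (h x hb) ▸ hx)
    · exact (ucost_nonneg hτ).not_gt (ucost_eq_zero_of_happy (h y hb) ▸ hy)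

lemma vStable_of_uStable [DecidableEq I] {fav : I → V} (hfav : ∀ x, p x = fav x)
    (hu : uStable G w τ tp p) : vStable G w τ tp fav p := by
  have hlt : ∀ q z, toLex (vcost G w τ tp fav q z) < toLex (vcost G w τ tp fav p z) →
      ucost G w τ tp q z < ucost G w τ tp p z := by
    intro q z h
    rcases Prod.Lex.toLex_lt_toLex.mp h with h | ⟨-, h⟩
    · exact h
    · simp [vcost, hfav] at h
  exact fun x y ⟨hx, hy⟩ => hu x y ⟨hlt _ _ hx, hlt _ _ hy⟩

lemma toLex_socialCost_le [Fintype I] {fav pOpt q : I → V} (hopt : ∀ x, happy G w τ tp pOpt x)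
    (hdist : (∀ x, happy G w τ tp q x) →
      ∑ x, (G.dist (fav x) (pOpt x) + 1) ≤ ∑ x, (G.dist (fav x) (q x) + 1)) :
    toLex (socialCost G w τ tp fav pOpt) ≤ toLex (socialCost G w τ tp fav q) := by
  have hopt0 : {x | ¬ happy G w τ tp pOpt x}.ncard = 0 := by simp [hopt]
  rw [Prod.Lex.toLex_le_toLex]
  by_cases hall : ∀ x, happy G w τ tp q x
  · exact Or.inr ⟨by simp [socialCost, hopt0, hall], hdist hall⟩
  · push Not at hall
    obtain ⟨x, hx⟩ := hall
    refine Or.inl ?_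
    simpa [socialCost, hopt0] using (Set.ncard_pos (Set.toFinite _)).mpr ⟨x, hx⟩

end Costs

lemma card_add_two_le_sum_dist [Fintype V] {G : SimpleGraph V} (hG : G.Connected) {q : V → V}
    (hq : q.Injective) (hne : q ≠ id) : Fintype.card V + 2 ≤ ∑ z, (G.dist z (q z) + 1) := by
  obtain ⟨z, hz⟩ := Function.ne_iff.mp hne
  -- a non-identity injection moves both `z` and `q z`
  have hqz : q (q z) ≠ q z := fun h => hz (hq h)
  have hmoved : 1 + 1 ≤ G.dist z (q z) + G.dist (q z) (q (q z)) :=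
    add_le_add (hG.pos_dist_of_ne (Ne.symm hz)) (hG.pos_dist_of_ne hqz.symm)
  have hsum := Finset.add_le_sum (f := fun z => G.dist z (q z)) (fun _ _ => Nat.zero_le _)
    (mem_univ z) (mem_univ (q z)) (Ne.symm hz)
  rw [sum_add_distrib, sum_const, card_univ, smul_eq_mul, mul_one]
  omega

end Schelling

namespace Schelling.SwapExample

def exampleGraph : SimpleGraph (Fin 4) := SimpleGraph.fromRel fun a b => a = 0 ∨ (a = 1 ∧ b = 2)

instance : DecidableRel exampleGraph.Adj := fun a b => inferInstanceAs (Decidable (a ≠ b ∧ _))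

def exampleType : Fin 4 → Bool := ![false, false, true, true]

def optPlacement : Fin 4 → Fin 4 := Equiv.swap 0 2

lemma exampleGraph_connected : exampleGraph.Connected := by
  refine (connected_iff_exists_forall_reachable _).2 ⟨0, fun v => ?_⟩
  rcases eq_or_ne v 0 with rfl | hv
  · rfl
  · exact Adj.reachable (by revert v; decide)

lemma happy_optPlacement (x : Fin 4) : happy exampleGraph 1 (1 / 3) exampleType optPlacement x := by
  rw [happy_one_third_iff, sCount_one_eq_card exampleGraph_connected,
    dCount_one_eq_card exampleGraph_connected]
  revert x
  decide

lemma happy_id_of_exampleType_eq_false (x : Fin 4) (hx : exampleType x = false) :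
    happy exampleGraph 1 (1 / 3) exampleType id x := by
  rw [happy_one_third_iff, sCount_one_eq_card exampleGraph_connected,
    dCount_one_eq_card exampleGraph_connected]
  revert x
  decide

lemma not_happy_id_two : ¬ happy exampleGraph 1 (1 / 3) exampleType id 2 := by
  rw [happy_one_third_iff, sCount_one_eq_card exampleGraph_connected,
    dCount_one_eq_card exampleGraph_connected]
  decide

lemma sum_dist_optPlacement : ∑ z, (exampleGraph.dist z (optPlacement z) + 1) = 6 := by
  have h02 : exampleGraph.dist 0 2 = 1 := dist_eq_one_iff_adj.mpr (by decide)
  have h20 : exampleGraph.dist 2 0 = 1 := dist_eq_one_iff_adj.mpr (by decide)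
  simp [Fin.sum_univ_four, optPlacement, Equiv.swap_apply_of_ne_of_ne, h02, h20]

end Schelling.SwapExample

open Schelling.SwapExample in
/-- There exists an instance of the swap Schelling game together with a
stable bijective placement `p` and a socially optimal bijective placement `p_opt`
(minimizing the social cost vector lexicographically) such that the total distance cost of
`p` is strictly smaller than the total distance cost of `p_opt`. -/
theorem SSG_stable_beats_optimum_distance :
    ∃ (V : Type) (_ : Fintype V) (I : Type) (_ : Fintype I) (_ : DecidableEq I)
      (G : SimpleGraph V) (w : ℕ) (τ : ℝ) (tp : I → Bool) (fav : I → V)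
      (p pOpt : I → V),
      G.Connected ∧ 1 ≤ w ∧ 0 ≤ τ ∧ τ ≤ 1 ∧
      2 ≤ (typeA tp).card ∧ 2 ≤ (typeB tp).card ∧
      Function.Bijective p ∧ vStable G w τ tp fav p ∧
      Function.Bijective pOpt ∧
      (∀ q : I → V, Function.Bijective q →
        toLex (socialCost G w τ tp fav pOpt) ≤ toLex (socialCost G w τ tp fav q)) ∧
      (∑ z : I, (G.dist (fav z) (p z) + 1)) < (∑ z : I, (G.dist (fav z) (pOpt z) + 1)) := by
  refine ⟨Fin 4, inferInstance, Fin 4, inferInstance, inferInstance, exampleGraph, 1, 1 / 3,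
    exampleType, id, id, optPlacement, exampleGraph_connected, le_rfl, by norm_num, by norm_num,
    by decide, by decide, Function.bijective_id, ?_, (Equiv.swap 0 2).bijective,
    fun q hq => ?_, ?_⟩
  · exact vStable_of_uStable (fun _ => rfl)
      (uStable_of_forall_happy_of_type false (by norm_num) happy_id_of_exampleType_eq_false)
  · refine toLex_socialCost_le happy_optPlacement fun hall => ?_
    have hne : q ≠ id := fun h => not_happy_id_two (h ▸ hall 2)
    simpa [sum_dist_optPlacement] using card_add_two_le_sum_dist exampleGraph_connected hq.1 hne
  · simp [sum_dist_optPlacement]
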